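/- arXiv:2402.03076 — 2 statements merged into one kernel-verified Lean document; each statement's English description precedes it below -/
import Mathlib

section
/- Let A, B ⊆ ℕ, let q be a natural number, and let L, M, N be unions of arithmetic progressions modulo q with N ⊆ L + M (sumset). For sets C, D ⊆ ℕ and integers a < b, write (C)ₐᵇ = C ∩ (a, b], |C|ₐᵇ for its cardinality, and ⟨C ∧ L⟩ₐᵇ = min over residue classes P of L of |C ∩ P|ₐᵇ. Let Υ(C, D; N) denote the number of quadruples (c₁, c₂, d₁, d₂) with c₁, c₂ ∈ (C)_{2N}^{3N}, d₁, d₂ ∈ (D)₀^N and c₁ − d₁ = c₂ − d₂. Then for every natural number N: (⟨B ∧ L⟩₀^N · |complement(A+B) ∩ N|_{2N}^{3N})² ≤ q · |complement(A) ∩ M|_N^{3N} · Υ(complement(A+B) ∩ N, B ∩ L; N). -/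
open scoped Classical Pointwise

/-- `L` is a union of arithmetic progressions modulo `q`. -/
def APUnion (q : ℕ) (L : Set ℕ) : Prop :=
  ∀ m n : ℕ, m % q = n % q → (m ∈ L ↔ n ∈ L)

/-- `|C|_a^b`: the number of elements of `C` in the interval `(a, b]`. -/
noncomputable def cnt (C : Set ℕ) (a b : ℕ) : ℕ :=
  ((Finset.Ioc a b).filter (fun n => n ∈ C)).card

/-- `⟨C ∧ L⟩_a^b`: the minimum over the residue classes constituting `L` of the number of
elements of `C` in that class and in `(a, b]`. -/
noncomputable def minCnt (q : ℕ) (L C : Set ℕ) (a b : ℕ) : ℕ :=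
  sInf ((fun l => cnt (C ∩ {n | n % q = l}) a b) '' {l | l < q ∧ l ∈ L})

/-- `Υ(C, D; N)`: the number of quadruples `(c₁, c₂, d₁, d₂)` with
`c₁, c₂ ∈ C ∩ (2N, 3N]`, `d₁, d₂ ∈ D ∩ (0, N]` and `c₁ - d₁ = c₂ - d₂`. -/
noncomputable def ups (C D : Set ℕ) (N : ℕ) : ℕ :=
  (((Finset.Ioc (2 * N) (3 * N) ×ˢ Finset.Ioc (2 * N) (3 * N)) ×ˢ
      (Finset.Ioc 0 N ×ˢ Finset.Ioc 0 N)).filter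
    (fun t => t.1.1 ∈ C ∧ t.1.2 ∈ C ∧ t.2.1 ∈ D ∧ t.2.2 ∈ D ∧
      (t.1.1 : ℤ) - (t.2.1 : ℤ) = (t.1.2 : ℤ) - (t.2.2 : ℤ))).card


/-! For every `n ∈ 𝒩` fix a decomposition `n = l + m` with `l ∈ L`, `m ∈ M`, and pair each
`n ∈ (A + B)ᶜ ∩ 𝒩 ∩ (2N, 3N]` with the elements `b ∈ B ∩ (0, N]` congruent to `l` modulo `q`;
there are at least `⟨B ∧ L⟩₀ᴺ` of them. Then `n - b ≡ m` lies in `M`, and not in `A` since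
`n ∉ A + B`, so `n - b ∈ Aᶜ ∩ M ∩ (N, 3N]`. Cauchy–Schwarz over the value of `n - b` bounds the
square of the number of pairs by `|Aᶜ ∩ M|_N^{3N}` times the number of pairs of pairs with equal
difference, and the latter is at most `Υ` because `b ≡ l` forces `b ∈ L`. -/

open Finset

lemma minCnt_le_cnt {q : ℕ} {L C : Set ℕ} {l : ℕ} (hl : l < q) (hlL : l ∈ L) (a b : ℕ) :
    minCnt q L C a b ≤ cnt (C ∩ {n | n % q = l}) a b :=
  Nat.sInf_le ⟨l, ⟨hl, hlL⟩, rfl⟩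

lemma pos_of_minCnt_pos {q : ℕ} {L C : Set ℕ} {a b : ℕ} (h : 0 < minCnt q L C a b) : 0 < q := by
  refine Nat.pos_of_ne_zero fun hq => ?_
  simp [hq, minCnt] at h

lemma Finset.sq_card_le_card_mul_card_filter_eq {α β : Type*} [DecidableEq β] {f : α → β}
    {s : Finset α} {t : Finset β} (hf : ∀ a ∈ s, f a ∈ t) :
    #s ^ 2 ≤ #t * #{x ∈ s ×ˢ s | f x.1 = f x.2} := by
  have hfiber : ∀ b, #{x ∈ s ×ˢ s | f x.1 = f x.2 ∧ f x.1 = b} = #{a ∈ s | f a = b} ^ 2 := by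
    intro b
    rw [sq, ← card_product]
    congr 1
    ext x
    simp only [mem_filter, mem_product]
    grind
  calc #s ^ 2 = (∑ b ∈ t, #{a ∈ s | f a = b}) ^ 2 := by rw [card_eq_sum_card_fiberwise hf]
    _ ≤ #t * ∑ b ∈ t, #{a ∈ s | f a = b} ^ 2 := sq_sum_le_card_mul_sum_sq
    _ = #t * #{x ∈ s ×ˢ s | f x.1 = f x.2} := by
      simp_rw [← hfiber, ← filter_filter]
      rw [← card_eq_sum_card_fiberwise]
      intro x hx
      exact hf _ (mem_product.1 (mem_filter.1 hx).1).1

/-- `ℓ n` stands for the `L`-summand of a fixed decomposition of `n ∈ C` in `L + M`. -/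
noncomputable def residuePairs (q : ℕ) (ℓ : ℕ → ℕ) (C B : Set ℕ) (N : ℕ) : Finset (ℕ × ℕ) :=
  {p ∈ Ioc (2 * N) (3 * N) ×ˢ Ioc 0 N | p.1 ∈ C ∧ p.2 ∈ B ∧ p.2 % q = ℓ p.1 % q}

section residuePairs

variable {q N : ℕ} {ℓ : ℕ → ℕ} {A B C L M : Set ℕ}

lemma minCnt_mul_cnt_le_card_residuePairs (hL : APUnion q L) (hq : 0 < q)
    (hℓ : ∀ n ∈ C, ℓ n ∈ L) :
    minCnt q L B 0 N * cnt C (2 * N) (3 * N) ≤ #(residuePairs q ℓ C B N) := by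
  refine mul_card_image_le_card_of_maps_to (f := Prod.fst) ?_ _ fun n hn => ?_
  · intro p hp
    simp only [residuePairs, mem_filter, mem_product] at hp
    exact mem_filter.2 ⟨hp.1.1, hp.2.1⟩
  · obtain ⟨hnI, hnC⟩ := mem_filter.1 hn
    have hclass : ℓ n % q < q ∧ ℓ n % q ∈ L :=
      ⟨Nat.mod_lt _ hq, (hL _ _ (Nat.mod_mod _ _)).2 (hℓ n hnC)⟩
    refine (minCnt_le_cnt hclass.1 hclass.2 0 N).trans ?_
    refine card_le_card_of_injOn (fun b => (n, b)) (fun b hb => ?_)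
      fun _ _ _ _ h => (Prod.mk.inj h).2
    simpa [residuePairs, hnC, mem_Ioc.1 hnI] using hb

lemma sub_mem_of_mem_residuePairs (hM : APUnion q M) (hC : C ⊆ (A + B)ᶜ)
    (hℓ : ∀ n ∈ C, ∃ m ∈ M, ℓ n + m = n) {p : ℕ × ℕ} (hp : p ∈ residuePairs q ℓ C B N) :
    p.1 - p.2 ∈ Ioc N (3 * N) ∧ p.1 - p.2 ∈ Aᶜ ∩ M := by
  obtain ⟨⟨hn, hb⟩, hnC, hbB, hbq⟩ := by simpa only [residuePairs, mem_filter, mem_product] using hp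
  rw [mem_Ioc] at hn hb
  obtain ⟨m, hmM, hℓm⟩ := hℓ _ hnC
  have hdecomp : p.1 - p.2 + p.2 = p.1 := Nat.sub_add_cancel (by omega)
  have hmod : (p.1 - p.2) % q = m % q := by
    refine Nat.ModEq.add_right_cancel' p.2 ?_
    calc p.1 - p.2 + p.2 = m + ℓ p.1 := by omega
      _ ≡ m + p.2 [MOD q] := Nat.ModEq.add_left _ hbq.symm
  refine ⟨mem_Ioc.2 ⟨by omega, by omega⟩, fun hA => ?_, (hM _ _ hmod).2 hmM⟩
  exact hC hnC (hdecomp ▸ Set.add_mem_add hA hbB)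

lemma card_filter_sub_eq_le_ups (hL : APUnion q L) (hℓ : ∀ n ∈ C, ℓ n ∈ L) :
    #{x ∈ residuePairs q ℓ C B N ×ˢ residuePairs q ℓ C B N | x.1.1 - x.1.2 = x.2.1 - x.2.2} ≤
      ups C (B ∩ L) N := by
  refine card_le_card_of_injOn (fun x => ((x.1.1, x.2.1), (x.1.2, x.2.2))) (fun x hx => ?_)
    fun _ _ _ _ h => by simp_all [Prod.ext_iff]
  simp only [residuePairs, coe_filter, mem_filter, mem_product, mem_Ioc,
    Set.mem_ofPred_eq] at hx
  obtain ⟨⟨⟨⟨hn₁, hb₁⟩, hC₁, hB₁, hq₁⟩, ⟨hn₂, hb₂⟩, hC₂, hB₂, hq₂⟩, hsub⟩ := hx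
  simp only [coe_filter, mem_product, mem_Ioc, Set.mem_ofPred_eq, Set.mem_inter_iff]
  refine ⟨⟨⟨hn₁, hn₂⟩, hb₁, hb₂⟩, hC₁, hC₂, ⟨hB₁, (hL _ _ hq₁).2 (hℓ _ hC₁)⟩,
    ⟨hB₂, (hL _ _ hq₂).2 (hℓ _ hC₂)⟩, ?_⟩
  omega

end residuePairs

theorem kawada_wooley_2_1_general (A B : Set ℕ) (q : ℕ) (L M 𝒩 : Set ℕ)
    (hL : APUnion q L) (hM : APUnion q M)
    (hsub : 𝒩 ⊆ L + M) (N : ℕ) :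
    (minCnt q L B 0 N * cnt ((A + B)ᶜ ∩ 𝒩) (2 * N) (3 * N)) ^ 2 ≤
      q * cnt (Aᶜ ∩ M) N (3 * N) * ups ((A + B)ᶜ ∩ 𝒩) (B ∩ L) N := by
  rcases Nat.eq_zero_or_pos (minCnt q L B 0 N) with h0 | hpos
  · simp [h0]
  have hq := pos_of_minCnt_pos hpos
  choose! ℓ hℓL m hmM hℓm using fun n (hn : n ∈ 𝒩) => Set.mem_add.1 (hsub hn)
  set C := (A + B)ᶜ ∩ 𝒩
  set P := residuePairs q ℓ C B N
  have hCL : ∀ n ∈ C, ℓ n ∈ L := fun n hn => hℓL n hn.2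
  have hCM : ∀ n ∈ C, ∃ m ∈ M, ℓ n + m = n := fun n hn => ⟨m n, hmM n hn.2, hℓm n hn.2⟩
  calc _ ≤ #P ^ 2 := Nat.pow_le_pow_left (minCnt_mul_cnt_le_card_residuePairs hL hq hCL) 2
    _ ≤ cnt (Aᶜ ∩ M) N (3 * N) * #{x ∈ P ×ˢ P | x.1.1 - x.1.2 = x.2.1 - x.2.2} :=
      sq_card_le_card_mul_card_filter_eq (f := fun p : ℕ × ℕ => p.1 - p.2)
        fun _ hp => by
          simpa only [mem_filter] using sub_mem_of_mem_residuePairs hM Set.inter_subset_left hCM hp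
    _ ≤ cnt (Aᶜ ∩ M) N (3 * N) * ups C (B ∩ L) N :=
      Nat.mul_le_mul_left _ (card_filter_sub_eq_le_ups hL hCL)
    _ ≤ q * cnt (Aᶜ ∩ M) N (3 * N) * ups C (B ∩ L) N := by
      rw [mul_assoc]
      exact Nat.le_mul_of_pos_left _ hq

/-- Theorem 2.1 of Kawada and Wooley. -/
theorem kawada_wooley_2_1 (A B : Set ℕ) (q : ℕ) (L M 𝒩 : Set ℕ)
    (hL : APUnion q L) (hM : APUnion q M) (h𝒩 : APUnion q 𝒩)
    (hsub : 𝒩 ⊆ L + M) (N : ℕ) :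
    (minCnt q L B 0 N * cnt ((A + B)ᶜ ∩ 𝒩) (2 * N) (3 * N)) ^ 2 ≤
      q * cnt (Aᶜ ∩ M) N (3 * N) * ups ((A + B)ᶜ ∩ 𝒩) (B ∩ L) N :=
  kawada_wooley_2_1_general A B q L M 𝒩 hL hM hsub N
end

section
/- Assume the set E₃ of odd n not representable as p² + p₁⁵ + ⋯ + p₁₆⁵ (primes) satisfies |E₃ ∩ [1,N]| ≪ N^{1/5 − 27/3200 + ε}. Then the set E of even n not representable as p² + p₁⁵ + ⋯ + p₁₇⁵ (primes) satisfies |E ∩ (2N, 3N]| ≪ N^{−27/3200 + ε} for every ε > 0, and hence E is finite. -/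
open scoped Classical

/-- `n` is a sum of one square of a prime and sixteen fifth powers of primes. -/
def RepSq16 (n : ℕ) : Prop :=
  ∃ (p : ℕ) (f : Fin 16 → ℕ), p.Prime ∧ (∀ i, (f i).Prime) ∧ n = p ^ 2 + ∑ i, (f i) ^ 5

/-- `n` is a sum of one square of a prime and seventeen fifth powers of primes. -/
def RepSq17 (n : ℕ) : Prop :=
  ∃ (p : ℕ) (f : Fin 17 → ℕ), p.Prime ∧ (∀ i, (f i).Prime) ∧ n = p ^ 2 + ∑ i, (f i) ^ 5

/-!
If an even `n ∈ (2N, 3N]` is not a prime square plus seventeen prime fifth powers, then for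
every odd prime `q ≤ N^{1/5}` the number `n - q⁵` is an odd exception for sixteen fifth powers
in `[1, 3N]`, and distinct `q` give distinct exceptions. Chebyshev's bound `π(x) ≫ x / log x`
supplies about `N^{1/5} / log N` such primes, which eventually exceeds the assumed
`O(N^{1/5 - 27/6400})` odd exceptions up to `3N`. Hence `(2N, 3N]` contains no even exception
once `N` is large, which gives both the bound (the constant absorbing small `N`) and finiteness.
-/

open Asymptotics Filter Finset Real

lemma isLittleO_rpow_mul_log_atTop {b : ℝ} (hb : b < 1) :
    (fun x : ℝ => x ^ b * log x) =o[atTop] id := by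
  have h := (isBigO_refl (fun x : ℝ => x ^ b) atTop).mul_isLittleO
    (isLittleO_log_rpow_atTop (sub_pos.2 hb))
  refine h.congr' (.of_eq rfl) ?_
  filter_upwards [eventually_gt_atTop 0] with x hx
  rw [← rpow_add hx, add_sub_cancel, rpow_one, id]

lemma eventually_mul_rpow_add_lt_primeCounting {b : ℝ} (hb : b < 1) (c d : ℝ) :
    ∀ᶠ x : ℝ in atTop, c * x ^ b + d < (⌊x⌋₊.primeCounting : ℝ) := by
  have hlog_add : (fun x : ℝ => log (x + 2)) =o[atTop] id :=
    (isLittleO_log_id_atTop.comp_tendsto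
      (tendsto_atTop_add_const_right _ 2 tendsto_id)).trans_isBigO
        ((isBigO_refl id atTop).add (isLittleO_const_id_atTop 2).isBigO)
  have hsmall : (fun x => (c * x ^ b + d) * log x + log (x + 2)) =o[atTop] id :=
    (((isLittleO_rpow_mul_log_atTop hb).const_mul_left c).add
      (isLittleO_log_id_atTop.const_mul_left d)).add hlog_add |>.congr_left fun x => by ring
  filter_upwards [hsmall.bound (by norm_num : (0 : ℝ) < 1 / 4), eventually_ge_atTop 8]
    with x hx hx8
  rw [Real.norm_eq_abs, Real.norm_eq_abs, id, abs_of_pos (a := x) (by linarith)] at hx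
  refine lt_of_lt_of_le ?_ (Chebyshev.pi_ge' (by linarith))
  rw [lt_div_iff₀ (log_pos (by linarith))]
  -- the left side is at most `x / 4`, and `x / 4 < (x - 1) log 2` once `x ≥ 8`
  nlinarith [le_abs_self ((c * x ^ b + d) * log x + log (x + 2)), log_two_gt_d9]

lemma eventually_mul_rpow_add_lt_primeCounting_floor_fifthRoot {a : ℝ} (ha : a < 1 / 5)
    (c d : ℝ) {m : ℝ} (hm : 0 ≤ m) :
    ∀ᶠ N : ℕ in atTop, c * (m * N) ^ a + d < (⌊(N : ℝ) ^ (1 / 5 : ℝ)⌋₊.primeCounting : ℝ) := by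
  have hroot : Tendsto (fun N : ℕ => (N : ℝ) ^ (1 / 5 : ℝ)) atTop atTop :=
    (tendsto_rpow_atTop (by norm_num)).comp tendsto_natCast_atTop_atTop
  filter_upwards [hroot.eventually
    (eventually_mul_rpow_add_lt_primeCounting (b := 5 * a) (by linarith) (c * m ^ a) d)] with N hN
  convert hN using 2
  rw [mul_rpow hm N.cast_nonneg, ← rpow_mul N.cast_nonneg]
  ring_nf

lemma floor_fifthRoot_pow_five_le (N : ℕ) : ⌊(N : ℝ) ^ (1 / 5 : ℝ)⌋₊ ^ 5 ≤ N := by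
  have h : (⌊(N : ℝ) ^ (1 / 5 : ℝ)⌋₊ : ℝ) ^ 5 ≤ ((N : ℝ) ^ (1 / 5 : ℝ)) ^ 5 :=
    pow_le_pow_left₀ (by positivity) (Nat.floor_le (by positivity)) 5
  rw [← rpow_natCast ((N : ℝ) ^ (1 / 5 : ℝ)), ← rpow_mul N.cast_nonneg] at h
  have h' : (⌊(N : ℝ) ^ (1 / 5 : ℝ)⌋₊ : ℝ) ^ 5 ≤ N := by simpa using h
  exact_mod_cast h'

lemma repSq17_add_pow_five {m q : ℕ} (hm : RepSq16 m) (hq : q.Prime) : RepSq17 (m + q ^ 5) := by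
  obtain ⟨p, f, hp, hf, hm⟩ := hm
  refine ⟨p, Fin.snoc f q, hp, fun i => ?_, ?_⟩
  · induction i using Fin.lastCases with
    | last => rwa [Fin.snoc_last]
    | cast i => rw [Fin.snoc_castSucc]; exact hf i
  · rw [hm, Fin.sum_univ_castSucc (n := 16)]
    simp only [Fin.snoc_castSucc, Fin.snoc_last, add_assoc]

lemma primeCounting_le_card_erase_two_add_one (y : ℕ) :
    y.primeCounting ≤ #((Nat.primesLE y).erase 2) + 1 := by
  have := pred_card_le_card_erase (s := Nat.primesLE y) (a := 2)
  rw [Nat.primesLE_card_eq_primeCounting] at this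
  omega

lemma card_erase_two_primesLE_le {n y M : ℕ} (heven : n % 2 = 0) (hn : ¬RepSq17 n)
    (hy : y ^ 5 < n) (hnM : n ≤ M) :
    #((Nat.primesLE y).erase 2) ≤ #((Icc 1 M).filter (fun m => m % 2 = 1 ∧ ¬RepSq16 m)) := by
  have hlt : ∀ q ∈ (Nat.primesLE y).erase 2, q ^ 5 < n := fun q hq =>
    (Nat.pow_le_pow_left (Nat.le_of_mem_primesLE (mem_of_mem_erase hq)) 5).trans_lt hy
  refine card_le_card_of_injOn (fun q => n - q ^ 5) (fun q hq => ?_) fun q hq r hr hqr => ?_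
  · have hq5 := hlt q hq
    obtain ⟨hq2, hq⟩ := mem_erase.1 hq
    have hprime := Nat.prime_of_mem_primesLE hq
    have hodd : q ^ 5 % 2 = 1 := Nat.odd_iff.1 (hprime.odd_of_ne_two hq2).pow
    simp only [coe_filter, Set.mem_ofPred_eq, mem_Icc]
    refine ⟨⟨by omega, by omega⟩, by omega, fun hrep => hn ?_⟩
    simpa [Nat.sub_add_cancel hq5.le] using repSq17_add_pow_five hrep hprime
  · have := hlt q hq
    have := hlt r hr
    simp only at hqr
    exact Nat.pow_left_injective (n := 5) (by norm_num) (show q ^ 5 = r ^ 5 by omega)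

lemma exists_pos_le_mul_rpow_of_eventually_nonpos {f : ℕ → ℝ} (h0 : f 0 ≤ 0)
    (hf : ∀ᶠ N in atTop, f N ≤ 0) (e : ℝ) : ∃ C, 0 < C ∧ ∀ N : ℕ, f N ≤ C * (N : ℝ) ^ e := by
  obtain ⟨N₀, hN₀⟩ := eventually_atTop.1 hf
  set C := 1 + ∑ N ∈ range N₀, |f N| / (N : ℝ) ^ e
  have hterm : ∀ N ∈ range N₀, 0 ≤ |f N| / (N : ℝ) ^ e := fun N _ => by positivity
  refine ⟨C, by linarith [sum_nonneg hterm], fun N => ?_⟩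
  have hCN : 0 ≤ C * (N : ℝ) ^ e :=
    mul_nonneg (by linarith [sum_nonneg hterm]) (rpow_nonneg N.cast_nonneg e)
  rcases Nat.eq_zero_or_pos N with rfl | hN
  · linarith
  rcases le_or_gt N₀ N with hle | hlt
  · linarith [hN₀ N hle]
  have hpow : 0 < (N : ℝ) ^ e := rpow_pos_of_pos (by exact_mod_cast hN) e
  calc f N ≤ |f N| / (N : ℝ) ^ e * (N : ℝ) ^ e := by
        rw [div_mul_cancel₀ _ hpow.ne']; exact le_abs_self _
    _ ≤ C * (N : ℝ) ^ e := by
        gcongr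
        linarith [single_le_sum hterm (mem_range.2 hlt)]

lemma setOf_finite_of_eventually_forall_Ioc {P : ℕ → Prop}
    (h : ∀ᶠ N in atTop, ∀ n ∈ Ioc (2 * N) (3 * N), ¬P n) : {n | P n}.Finite := by
  obtain ⟨N₀, hN₀⟩ := eventually_atTop.1 h
  refine (Set.finite_Iic (3 * N₀ + 6)).subset fun n hn => ?_
  by_contra hgt
  rw [Set.mem_Iic, not_le] at hgt
  exact hN₀ ((n + 2) / 3) (by omega) n (mem_Ioc.2 (by omega)) hn

/-- Final step of the proof: one more prime fifth power, and the exceptional set is finite. -/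
theorem step_final
    (hE₃ : ∀ ε : ℝ, 0 < ε → ∃ C : ℝ, 0 < C ∧ ∀ N : ℕ,
      (((Finset.Icc 1 N).filter (fun n => n % 2 = 1 ∧ ¬RepSq16 n)).card : ℝ) ≤
        C * (N : ℝ) ^ ((1 : ℝ) / 5 - 27 / 3200 + ε)) :
    (∀ ε : ℝ, 0 < ε → ∃ C : ℝ, 0 < C ∧ ∀ N : ℕ,
      (((Finset.Ioc (2 * N) (3 * N)).filter (fun n => n % 2 = 0 ∧ ¬RepSq17 n)).card : ℝ) ≤
        C * (N : ℝ) ^ (-(27 : ℝ) / 3200 + ε)) ∧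
      {n : ℕ | n % 2 = 0 ∧ ¬RepSq17 n}.Finite := by
  obtain ⟨C, -, hC⟩ := hE₃ (27 / 6400) (by norm_num)
  have hempty : ∀ᶠ N in atTop, ∀ n ∈ Ioc (2 * N) (3 * N), ¬(n % 2 = 0 ∧ ¬RepSq17 n) := by
    filter_upwards [eventually_mul_rpow_add_lt_primeCounting_floor_fifthRoot
      (a := 1 / 5 - 27 / 3200 + 27 / 6400) (by norm_num) C 1 (m := 3) (by norm_num)]
      with N hN n hn ⟨heven, hrep⟩
    set y := ⌊(N : ℝ) ^ (1 / 5 : ℝ)⌋₊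
    obtain ⟨hlo, hhi⟩ := mem_Ioc.1 hn
    have hodd := card_erase_two_primesLE_le heven hrep
      ((floor_fifthRoot_pow_five_le N).trans_lt (by omega)) hhi
    have hcount := (Nat.cast_le (α := ℝ)).2
      ((primeCounting_le_card_erase_two_add_one y).trans (Nat.add_le_add_right hodd 1))
    have hexc := hC (3 * N)
    push_cast at hexc hcount
    linarith
  refine ⟨fun ε _ => exists_pos_le_mul_rpow_of_eventually_nonpos (by simp) ?_ _,
    setOf_finite_of_eventually_forall_Ioc hempty⟩
  filter_upwards [hempty] with N hN
  simp [filter_eq_empty_iff.2 hN]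
end
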